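/- arXiv:2505.14240 — 4 statements merged into one kernel-verified Lean document; each statement's English description precedes it below -/
import Mathlib

section
/- Fix y ∈ 𝒴 and a symmetric proposal structure q on 𝒩(y). For y' ∈ 𝒩(y), define g_{y'} : ℝ → ℝ by g_{y'}(x) = t·q(y',y)·exp((x+φ(y')−φ(y))/t) if x ≤ x₀ and g_{y'}(x) = t·q(y,y')·((x+φ(y')−φ(y))/t + 1 − log(q(y,y')/q(y',y))) if x > x₀, where x₀ = t·log(q(y,y')/q(y',y)) + φ(y) − φ(y'). Then g_{y'} is convex, continuously differentiable, and (q(y,y')/t)-smooth (its derivative is Lipschitz with constant q(y,y')/t). -/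
/-! With `u x = (x + φy' - φy) / t - log (a / b)` one has `g x = t * a * expLin (u x)`, where
`expLin` is `exp` on `(-∞, 0]` continued by its tangent line at `0`. The derivative of `expLin`
is `exp (min u 0)`: continuous, monotone, and `1`-Lipschitz because `exp' ≤ 1` on `(-∞, 0]`.
By the chain rule `g' x = a * exp (min (u x) 0)`, which is monotone (so `g` is convex) and
`(a / t)`-Lipschitz since `u` has slope `1 / t`. -/

open Real Set

noncomputable def expLin (u : ℝ) : ℝ := if u ≤ 0 then exp u else u + 1

lemma lipschitzOnWith_exp_Iic_zero : LipschitzOnWith 1 exp (Iic 0) :=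
  (convex_Iic 0).lipschitzOnWith_of_nnnorm_hasDerivWithin_le
    (fun u _ => (hasDerivAt_exp u).hasDerivWithinAt) fun u hu => by
      rw [← NNReal.coe_le_coe, coe_nnnorm, norm_of_nonneg (exp_pos u).le, NNReal.coe_one]
      exact exp_le_one_iff.2 hu

lemma lipschitzWith_exp_min_zero : LipschitzWith 1 fun u => exp (min u 0) := by
  rw [← lipschitzOnWith_univ]
  simpa only [one_mul, Function.comp_def, id] using lipschitzOnWith_exp_Iic_zero.comp
    ((LipschitzWith.id.min_const 0).lipschitzOnWith (s := univ)) fun u _ => min_le_right u 0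

lemma monotone_exp_min_zero : Monotone fun u => exp (min u 0) :=
  fun _ _ h => exp_le_exp.2 (min_le_min_right 0 h)

lemma hasDerivAt_expLin (u : ℝ) : HasDerivAt expLin (exp (min u 0)) u := by
  have hexp : EqOn expLin exp (Iic 0) := fun v hv => if_pos hv
  have hlin : EqOn expLin (· + 1) (Ici 0) := fun v hv => by
    rcases (mem_Ici.1 hv).eq_or_lt with rfl | hv
    · simp [expLin]
    · simp [expLin, not_le.2 hv]
  rcases lt_trichotomy u 0 with hu | rfl | hu
  · rw [min_eq_left hu.le]
    exact (hasDerivAt_exp u).congr_of_eventuallyEq (hexp.eventuallyEq_of_mem (Iic_mem_nhds hu))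
  · have hl : HasDerivWithinAt expLin 1 (Iic 0) 0 := by
      simpa using (hasDerivAt_exp 0).hasDerivWithinAt.congr hexp (hexp self_mem_Iic)
    have hr : HasDerivWithinAt expLin 1 (Ici 0) 0 :=
      ((hasDerivAt_id 0).add_const 1).hasDerivWithinAt.congr hlin (hlin self_mem_Ici)
    have h := hl.union hr
    rw [Iic_union_Ici, hasDerivWithinAt_univ] at h
    simpa using h
  · rw [min_eq_right hu.le, exp_zero]
    exact ((hasDerivAt_id u).add_const 1).congr_of_eventuallyEq
      (hlin.eventuallyEq_of_mem (Ici_mem_nhds hu))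

lemma ite_exp_linear_eq_mul_expLin {t a b : ℝ} (ht : 0 < t) (ha : 0 < a) (hb : 0 < b)
    (c x : ℝ) :
    (if x ≤ t * log (a / b) - c then t * b * exp ((x + c) / t)
      else t * a * ((x + c) / t + 1 - log (a / b))) =
      t * a * expLin ((x + c) / t - log (a / b)) := by
  have hle : (x + c) / t - log (a / b) ≤ 0 ↔ x ≤ t * log (a / b) - c := by
    rw [sub_nonpos, div_le_iff₀ ht, le_sub_iff_add_le, mul_comm]
  simp only [expLin, hle]
  split_ifs
  · rw [exp_sub, exp_log (div_pos ha hb)]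
    field_simp
  · ring

/-- The piecewise scalar function `g` used to build the one-step Fenchel–Young
potential is convex, continuously differentiable, and `(a/t)`-smooth. -/
theorem one_step_scalar_convex_smooth
    (t a b φy φy' : ℝ) (ht : 0 < t) (ha : 0 < a) (hb : 0 < b)
    (x₀ : ℝ) (hx₀ : x₀ = t * Real.log (a / b) + φy - φy')
    (g : ℝ → ℝ)
    (hg : ∀ x, g x =
      if x ≤ x₀ then t * b * Real.exp ((x + φy' - φy) / t)
      else t * a * ((x + φy' - φy) / t + 1 - Real.log (a / b))) :
    ConvexOn ℝ Set.univ g ∧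
    ∃ g' : ℝ → ℝ, Continuous g' ∧ (∀ x, HasDerivAt g (g' x) x) ∧
      ∀ x₁ x₂, |g' x₁ - g' x₂| ≤ (a / t) * |x₁ - x₂| := by
  set u : ℝ → ℝ := fun x => (x + (φy' - φy)) / t - log (a / b) with hu_def
  have hg_eq : g = fun x => t * a * expLin (u x) := by
    ext x
    rw [hg, hx₀, ← ite_exp_linear_eq_mul_expLin ht ha hb]
    simp only [add_sub_assoc, sub_sub_eq_add_sub]
  have hu : ∀ x, HasDerivAt u t⁻¹ x := fun x => by
    simpa [hu_def] using
      (((hasDerivAt_id x).add_const (φy' - φy)).div_const t).sub_const (log (a / b))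
  set g' : ℝ → ℝ := fun x => a * exp (min (u x) 0)
  have hderiv : ∀ x, HasDerivAt g (g' x) x := fun x => by
    rw [hg_eq]
    refine (((hasDerivAt_expLin (u x)).comp x (hu x)).const_mul (t * a)).congr_deriv ?_
    show _ = a * _
    field_simp
  have hmono : Monotone g' := fun x y hxy =>
    mul_le_mul_of_nonneg_left (monotone_exp_min_zero (by simp only [hu_def]; gcongr)) ha.le
  refine ⟨Monotone.convexOn_univ_of_deriv (fun x => (hderiv x).differentiableAt)
      (by rwa [funext fun x => (hderiv x).deriv]), g', by fun_prop, hderiv, fun x₁ x₂ => ?_⟩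
  calc |g' x₁ - g' x₂| = a * dist (exp (min (u x₁) 0)) (exp (min (u x₂) 0)) := by
        rw [Real.dist_eq, ← mul_sub, abs_mul, abs_of_pos ha]
    _ ≤ a * dist (u x₁) (u x₂) := by
        gcongr; simpa using lipschitzWith_exp_min_zero.dist_le_mul (u x₁) (u x₂)
    _ = a / t * |x₁ - x₂| := by
        rw [Real.dist_eq, show u x₁ - u x₂ = (x₁ - x₂) / t by simp only [hu_def]; ring,
          abs_div, abs_of_pos ht]
        ring
end

section
/- Let F_y(θ) = ⟨θ,y⟩ + Σ_{y'∈𝒩(y)} f_y(θ; y'), where f_y(θ; y') = g_{y'}(⟨θ, y'−y⟩) with g_{y'} as above. Then F_y is convex and differentiable with ∇_θ F_y(θ) = E_{p^{(1)}_{θ,y}}[Y], the expected first iterate of the Metropolis–Hastings chain initialized at y; moreover F_y is L-smooth with L = (1/t)·Σ_{y'∈𝒩(y)} q(y,y')·‖y'−y‖², i.e. L = E_{q(y,·)}‖Y−y‖²/t. -/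
/-!
Each summand of `F` is a ridge function `θ ↦ g(⟪θ, y' - y⟫)` whose profile `g` is a `C¹`
function (an exponential glued to its tangent line) with derivative
`s ↦ min (q y y') (q y' y * exp ((s + φ y' - φ y) / t))`, i.e. the probability of the first
Metropolis–Hastings move `y → y'`. The chain rule gives the gradient `y + ∑ p(y') • (y' - y)`;
monotonicity of the derivative gives convexity; and since `min c (b * exp (· / t))` is
`c / t`-Lipschitz, Cauchy–Schwarz bounds the variation of the gradient by
`(1 / t) ∑ q y y' ‖y' - y‖² ‖θ₁ - θ₂‖`.
-/

open Set Finset Real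
open scoped RealInnerProductSpace

lemma convexOn_univ_of_hasDerivAt_of_monotone {f f' : ℝ → ℝ} (hf : ∀ x, HasDerivAt f (f' x) x)
    (hf' : Monotone f') : ConvexOn ℝ univ f :=
  Monotone.convexOn_univ_of_deriv (fun x => (hf x).differentiableAt)
    (by rwa [show deriv f = f' from funext fun x => (hf x).deriv])

theorem ConvexOn.finsetSum {ι 𝕜 E : Type*} [Field 𝕜] [LinearOrder 𝕜] [IsStrictOrderedRing 𝕜]
    [AddCommGroup E] [Module 𝕜 E] {t : Set E} (ht : Convex 𝕜 t) {s : Finset ι} {f : ι → E → 𝕜}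
    (hf : ∀ i ∈ s, ConvexOn 𝕜 t (f i)) : ConvexOn 𝕜 t (fun x => ∑ i ∈ s, f i x) := by
  classical
  induction s using Finset.induction_on with
  | empty => simpa using convexOn_const (0 : 𝕜) ht
  | insert i s hi ih =>
    simp only [sum_insert hi]
    exact (hf i (mem_insert_self i s)).add (ih fun j hj => hf j (mem_insert_of_mem hj))

section InnerProduct

variable {ι E : Type*} [NormedAddCommGroup E] [InnerProductSpace ℝ E]

theorem ConvexOn.comp_inner_left {f : ℝ → ℝ} (hf : ConvexOn ℝ univ f) (v : E) :
    ConvexOn ℝ univ (fun x : E => f ⟪x, v⟫) := by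
  simpa [Function.comp_def, real_inner_comm] using hf.comp_linearMap (innerₛₗ ℝ v)

theorem HasGradientAt.add [CompleteSpace E] {f g : E → ℝ} {f' g' x : E} (hf : HasGradientAt f f' x)
    (hg : HasGradientAt g g' x) : HasGradientAt (fun x => f x + g x) (f' + g') x := by
  rw [hasGradientAt_iff_hasFDerivAt] at hf hg ⊢
  rw [map_add]
  exact hf.add hg

theorem HasGradientAt.sum [CompleteSpace E] {s : Finset ι} {f : ι → E → ℝ} {f' : ι → E} {x : E}
    (hf : ∀ i ∈ s, HasGradientAt (f i) (f' i) x) :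
    HasGradientAt (fun x => ∑ i ∈ s, f i x) (∑ i ∈ s, f' i) x := by
  simp only [hasGradientAt_iff_hasFDerivAt] at hf ⊢
  simpa only [map_sum] using HasFDerivAt.fun_sum hf

theorem HasDerivAt.hasGradientAt_comp_inner [CompleteSpace E] {f : ℝ → ℝ} {f' : ℝ} {x v : E}
    (hf : HasDerivAt f f' ⟪x, v⟫) : HasGradientAt (fun x => f ⟪x, v⟫) (f' • v) x := by
  have hinner : HasFDerivAt (fun x => ⟪x, v⟫) (InnerProductSpace.toDual ℝ E v) x := by
    convert (InnerProductSpace.toDual ℝ E v : E →L[ℝ] ℝ).hasFDerivAt using 1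
    ext w
    rw [InnerProductSpace.toDual_apply_apply, real_inner_comm]
  rw [hasGradientAt_iff_hasFDerivAt, map_smul]
  exact hf.comp_hasFDerivAt x hinner

theorem norm_sum_smul_inner_sub_le {s : Finset ι} {v : ι → E} {f' : ι → ℝ → ℝ} {L : ι → ℝ}
    (hL : ∀ i ∈ s, ∀ u w, |f' i u - f' i w| ≤ L i * |u - w|) (x₁ x₂ : E) :
    ‖∑ i ∈ s, f' i ⟪x₁, v i⟫ • v i - ∑ i ∈ s, f' i ⟪x₂, v i⟫ • v i‖ ≤
      (∑ i ∈ s, L i * ‖v i‖ ^ 2) * ‖x₁ - x₂‖ := by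
  rw [← sum_sub_distrib, sum_mul]
  refine (norm_sum_le _ _).trans (sum_le_sum fun i hi => ?_)
  have hLi : 0 ≤ L i := by simpa using (abs_nonneg _).trans (hL i hi 1 0)
  rw [← sub_smul, norm_smul, Real.norm_eq_abs]
  calc |f' i ⟪x₁, v i⟫ - f' i ⟪x₂, v i⟫| * ‖v i‖
      ≤ L i * |⟪x₁ - x₂, v i⟫| * ‖v i‖ := by
        rw [inner_sub_left]; gcongr; exact hL i hi _ _
    _ ≤ L i * (‖x₁ - x₂‖ * ‖v i‖) * ‖v i‖ := by gcongr; exact abs_real_inner_le_norm _ _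
    _ = L i * ‖v i‖ ^ 2 * ‖x₁ - x₂‖ := by ring

end InnerProduct

noncomputable def mhRate (t b c u : ℝ) : ℝ := min c (b * exp (u / t))

/-- The antiderivative of `mhRate t b c`: its two branches meet with equal slopes at
`u = t * log (c / b)`, where `b * exp (u / t) = c`. In the theorem `b = q y' y`, `c = q y y'`
and `u = ⟪θ, y' - y⟫ + φ y' - φ y`. -/
noncomputable def mhPotential (t b c u : ℝ) : ℝ :=
  if u ≤ t * log (c / b) then t * b * exp (u / t) else t * c * (u / t + 1 - log (c / b))

section MetropolisHastings

variable {t b c : ℝ}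

lemma mhRate_eq_mul_min_one (hc : 0 < c) (u : ℝ) :
    mhRate t b c u = c * min 1 (b / c * exp (u / t)) := by
  rw [mhRate, mul_min_of_nonneg _ _ hc.le, mul_one, ← mul_assoc, mul_div_cancel₀ _ hc.ne']

lemma mhPotential_add_sub (a₁ a₂ x : ℝ) :
    mhPotential t b c (x + (a₁ - a₂)) =
      if x ≤ t * log (c / b) + a₂ - a₁ then t * b * exp ((x + a₁ - a₂) / t)
      else t * c * ((x + a₁ - a₂) / t + 1 - log (c / b)) := by
  rw [mhPotential, ← add_sub_assoc]
  exact if_congr ⟨fun h => by linarith, fun h => by linarith⟩ rfl rfl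

lemma mul_exp_div_le_iff (ht : 0 < t) (hb : 0 < b) (hc : 0 < c) (u : ℝ) :
    b * exp (u / t) ≤ c ↔ u ≤ t * log (c / b) := by
  rw [← div_le_iff₀' ht, le_log_iff_exp_le (div_pos hc hb), le_div_iff₀' hb]

lemma le_mul_exp_div_iff (ht : 0 < t) (hb : 0 < b) (hc : 0 < c) (u : ℝ) :
    c ≤ b * exp (u / t) ↔ t * log (c / b) ≤ u := by
  rw [← le_div_iff₀' ht, log_le_iff_le_exp (div_pos hc hb), div_le_iff₀' hb]

lemma mhRate_monotone (ht : 0 ≤ t) (hb : 0 ≤ b) : Monotone (mhRate t b c) := fun _ _ huv =>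
  min_le_min_left c (by gcongr)

lemma hasDerivAt_mhPotential (ht : 0 < t) (hb : 0 < b) (hc : 0 < c) (u : ℝ) :
    HasDerivAt (mhPotential t b c) (mhRate t b c u) u := by
  set T := t * log (c / b)
  have hleft : ∀ u ≤ T, HasDerivWithinAt (mhPotential t b c) (mhRate t b c u) (Iic T) u := by
    intro u hu
    have hexp : HasDerivAt (fun u => t * b * exp (u / t)) (b * exp (u / t)) u :=
      ((hasDerivAt_id' u).div_const t).exp.const_mul (t * b) |>.congr_deriv (by field_simp)
    rw [mhRate, min_eq_right ((mul_exp_div_le_iff ht hb hc u).2 hu)]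
    exact hexp.hasDerivWithinAt.congr (fun v hv => if_pos hv) (if_pos hu)
  have hright : ∀ u, T ≤ u → HasDerivWithinAt (mhPotential t b c) (mhRate t b c u) (Ici T) u := by
    intro u hu
    have hlin : HasDerivAt (fun u => t * c * (u / t + 1 - log (c / b))) c u :=
      (((hasDerivAt_id' u).div_const t).add_const 1).sub_const (log (c / b)) |>.const_mul (t * c)
        |>.congr_deriv (by field_simp)
    have hlinOn :
        EqOn (mhPotential t b c) (fun u => t * c * (u / t + 1 - log (c / b))) (Ici T) := by
      intro v hv
      rcases (mem_Ici.1 hv).eq_or_lt with rfl | hlt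
      · rw [mhPotential, if_pos le_rfl, mul_div_cancel_left₀ _ ht.ne', exp_log (div_pos hc hb)]
        field_simp
        ring
      · exact if_neg hlt.not_ge
    rw [mhRate, min_eq_left ((le_mul_exp_div_iff ht hb hc u).2 hu)]
    exact hlin.hasDerivWithinAt.congr hlinOn (hlinOn hu)
  rcases lt_trichotomy u T with h | rfl | h
  · exact (hleft u h.le).hasDerivAt (Iic_mem_nhds h)
  · simpa [Iic_union_Ici] using (hleft _ le_rfl).union (hright _ le_rfl)
  · exact (hright u h.le).hasDerivAt (Ici_mem_nhds h)

lemma abs_mhRate_sub_le (ht : 0 < t) (hb : 0 ≤ b) (hc : 0 ≤ c) (u w : ℝ) :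
    |mhRate t b c u - mhRate t b c w| ≤ c / t * |u - w| := by
  wlog huw : u ≤ w generalizing u w
  · rw [abs_sub_comm, abs_sub_comm u]
    exact this w u (le_of_not_ge huw)
  have hx : (u - w) / t ≤ 0 := div_nonpos_of_nonpos_of_nonneg (by linarith) ht.le
  have hnonneg : 0 ≤ mhRate t b c w := le_min hc (by positivity)
  -- with `1 + x ≤ exp x`, this bounds the increment by `mhRate t b c w * (w - u) / t`
  have hdecay : mhRate t b c w * exp ((u - w) / t) ≤ mhRate t b c u := by
    refine le_min ?_ ?_
    · exact (mul_le_of_le_one_right hnonneg (exp_le_one_iff.2 hx)).trans (min_le_left _ _)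
    · calc mhRate t b c w * exp ((u - w) / t) ≤ b * exp (w / t) * exp ((u - w) / t) := by
            gcongr; exact min_le_right _ _
        _ = b * exp (u / t) := by rw [mul_assoc, ← exp_add]; congr 2; ring
  rw [abs_sub_comm, abs_of_nonneg (sub_nonneg.2 (mhRate_monotone ht.le hb huw)),
    abs_of_nonpos (by linarith)]
  calc mhRate t b c w - mhRate t b c u
      ≤ mhRate t b c w * -((u - w) / t) := by nlinarith [add_one_le_exp ((u - w) / t)]
    _ ≤ c * -((u - w) / t) := mul_le_mul_of_nonneg_right (min_le_left _ _) (by linarith)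
    _ = c / t * -(u - w) := by ring

end MetropolisHastings

theorem one_step_potential_gradient_smooth_general {d : ℕ}
    (y : EuclideanSpace ℝ (Fin d)) (N : Finset (EuclideanSpace ℝ (Fin d)))
    (φ : EuclideanSpace ℝ (Fin d) → ℝ) (t : ℝ) (ht : 0 < t)
    (q : EuclideanSpace ℝ (Fin d) → EuclideanSpace ℝ (Fin d) → ℝ)
    (hq_pos : ∀ y' ∈ N, 0 < q y y' ∧ 0 < q y' y)
    (g : EuclideanSpace ℝ (Fin d) → ℝ → ℝ)
    (hg : ∀ y' ∈ N, ∀ x : ℝ, g y' x =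
      if x ≤ t * Real.log (q y y' / q y' y) + φ y - φ y' then
        t * q y' y * Real.exp ((x + φ y' - φ y) / t)
      else
        t * q y y' * ((x + φ y' - φ y) / t + 1 - Real.log (q y y' / q y' y)))
    (F : EuclideanSpace ℝ (Fin d) → ℝ)
    (hF : ∀ θ, F θ = ⟪θ, y⟫ + ∑ y' ∈ N, g y' ⟪θ, y' - y⟫)
    (p1 : EuclideanSpace ℝ (Fin d) → EuclideanSpace ℝ (Fin d) → ℝ)
    (hp1 : ∀ θ, ∀ y' ∈ N, p1 θ y' =
      q y y' * min 1 ((q y' y / q y y') *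
        Real.exp ((⟪θ, y' - y⟫ + φ y' - φ y) / t)))
    (m : EuclideanSpace ℝ (Fin d) → EuclideanSpace ℝ (Fin d))
    (hm : ∀ θ, m θ = y + ∑ y' ∈ N, p1 θ y' • (y' - y)) :
    ConvexOn ℝ Set.univ F ∧
    (∀ θ, HasGradientAt F (m θ) θ) ∧
    (∀ θ₁ θ₂, ‖m θ₁ - m θ₂‖ ≤
      ((1 / t) * ∑ y' ∈ N, q y y' * ‖y' - y‖ ^ 2) * ‖θ₁ - θ₂‖) := by
  set P : EuclideanSpace ℝ (Fin d) → ℝ → ℝ :=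
    fun y' s => mhPotential t (q y' y) (q y y') (s + (φ y' - φ y))
  set R : EuclideanSpace ℝ (Fin d) → ℝ → ℝ :=
    fun y' s => mhRate t (q y' y) (q y y') (s + (φ y' - φ y))
  have hF' : F = fun θ => ⟪θ, y⟫ + ∑ y' ∈ N, P y' ⟪θ, y' - y⟫ := funext fun θ => by
    rw [hF]
    exact congrArg _ <| sum_congr rfl fun y' hy' =>
      (hg y' hy' _).trans (mhPotential_add_sub ..).symm
  have hm' : m = fun θ => y + ∑ y' ∈ N, R y' ⟪θ, y' - y⟫ • (y' - y) := funext fun θ => by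
    rw [hm]
    refine congrArg _ <| sum_congr rfl fun y' hy' => congrArg (· • (y' - y)) ?_
    rw [hp1 θ y' hy', ← mhRate_eq_mul_min_one (hq_pos y' hy').1, add_sub_assoc]
  have hP : ∀ y' ∈ N, ∀ s, HasDerivAt (P y') (R y' s) s := fun y' hy' s =>
    (hasDerivAt_mhPotential ht (hq_pos y' hy').2 (hq_pos y' hy').1 _).comp_add_const _ _
  have hR : ∀ y' ∈ N, Monotone (R y') := fun y' hy' =>
    (mhRate_monotone ht.le (hq_pos y' hy').2.le).comp (monotone_id.add_const _)
  have hRlip : ∀ y' ∈ N, ∀ u w, |R y' u - R y' w| ≤ q y y' / t * |u - w| := fun y' hy' u w => by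
    simpa only [add_sub_add_right_eq_sub] using
      abs_mhRate_sub_le ht (hq_pos y' hy').2.le (hq_pos y' hy').1.le
        (u + (φ y' - φ y)) (w + (φ y' - φ y))
  refine ⟨?_, fun θ => ?_, fun θ₁ θ₂ => ?_⟩
  · rw [hF']
    refine ((convexOn_id convex_univ).comp_inner_left y).add <| ConvexOn.finsetSum convex_univ
      fun y' hy' => ?_
    exact (convexOn_univ_of_hasDerivAt_of_monotone (hP y' hy') (hR y' hy')).comp_inner_left _
  · rw [hF', hm']
    simpa using ((hasDerivAt_id' _).hasGradientAt_comp_inner).add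
      (HasGradientAt.sum fun y' hy' => (hP y' hy' _).hasGradientAt_comp_inner)
  · rw [hm', add_sub_add_left_eq_sub, one_div, mul_sum]
    refine (norm_sum_smul_inner_sub_le hRlip θ₁ θ₂).trans_eq ?_
    congr 1
    exact sum_congr rfl fun y' _ => by ring

/-- The one-step potential `F_y` is convex, differentiable with gradient equal
to the expected first Metropolis–Hastings iterate, and
`E_{q(y,·)}‖Y−y‖²/t`-smooth. -/
theorem one_step_potential_gradient_smooth {d : ℕ}
    (y : EuclideanSpace ℝ (Fin d)) (N : Finset (EuclideanSpace ℝ (Fin d)))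
    (hy : y ∉ N)
    (φ : EuclideanSpace ℝ (Fin d) → ℝ) (t : ℝ) (ht : 0 < t)
    (q : EuclideanSpace ℝ (Fin d) → EuclideanSpace ℝ (Fin d) → ℝ)
    (hq_pos : ∀ y' ∈ N, 0 < q y y' ∧ 0 < q y' y)
    (g : EuclideanSpace ℝ (Fin d) → ℝ → ℝ)
    (hg : ∀ y' ∈ N, ∀ x : ℝ, g y' x =
      if x ≤ t * Real.log (q y y' / q y' y) + φ y - φ y' then
        t * q y' y * Real.exp ((x + φ y' - φ y) / t)
      else
        t * q y y' * ((x + φ y' - φ y) / t + 1 - Real.log (q y y' / q y' y)))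
    (F : EuclideanSpace ℝ (Fin d) → ℝ)
    (hF : ∀ θ, F θ = ⟪θ, y⟫ + ∑ y' ∈ N, g y' ⟪θ, y' - y⟫)
    (p1 : EuclideanSpace ℝ (Fin d) → EuclideanSpace ℝ (Fin d) → ℝ)
    (hp1 : ∀ θ, ∀ y' ∈ N, p1 θ y' =
      q y y' * min 1 ((q y' y / q y y') *
        Real.exp ((⟪θ, y' - y⟫ + φ y' - φ y) / t)))
    (m : EuclideanSpace ℝ (Fin d) → EuclideanSpace ℝ (Fin d))
    (hm : ∀ θ, m θ = y + ∑ y' ∈ N, p1 θ y' • (y' - y)) :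
    ConvexOn ℝ Set.univ F ∧
    (∀ θ, HasGradientAt F (m θ) θ) ∧
    (∀ θ₁ θ₂, ‖m θ₁ - m θ₂‖ ≤
      ((1 / t) * ∑ y' ∈ N, q y y' * ‖y' - y‖ ^ 2) * ‖θ₁ - θ₂‖) :=
  one_step_potential_gradient_smooth_general y N φ t ht q hq_pos g hg F hF p1 hp1 m hm
end

section
/- Fix θ, y, and suppose no neighbor y' ∈ 𝒩(y) has ⟨θ,y'⟩+φ(y') = ⟨θ,y⟩+φ(y). Let 𝒩_better(y) = {y' ∈ 𝒩(y) : ⟨θ,y'⟩+φ(y') > ⟨θ,y⟩+φ(y)}. Then the expected first Metropolis–Hastings iterate satisfies E_{p^{(1)}_{θ,y}}[Y] → y + Σ_{y'∈𝒩_better(y)} q(y,y')·(y'−y) as t → 0⁺. -/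
open Finset Filter
open scoped RealInnerProductSpace Topology Classical

/-- Low-temperature limit of the expected first Metropolis–Hastings iterate:
it converges to `y + Σ_{y'∈𝒩_better(y)} q(y,y')·(y'−y)` as `t → 0⁺`. -/
theorem expected_first_iterate_low_temperature_limit {d : ℕ}
    (y : EuclideanSpace ℝ (Fin d)) (N : Finset (EuclideanSpace ℝ (Fin d)))
    (hy : y ∉ N)
    (φ : EuclideanSpace ℝ (Fin d) → ℝ) (θ : EuclideanSpace ℝ (Fin d))
    (q : EuclideanSpace ℝ (Fin d) → EuclideanSpace ℝ (Fin d) → ℝ)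
    (hq_pos : ∀ y' ∈ N, 0 < q y y' ∧ 0 < q y' y)
    (hne : ∀ y' ∈ N, ⟪θ, y'⟫ + φ y' ≠ ⟪θ, y⟫ + φ y) :
    Tendsto
      (fun t : ℝ => y + ∑ y' ∈ N,
        (q y y' * min 1 ((q y' y / q y y') *
          Real.exp ((⟪θ, y' - y⟫ + φ y' - φ y) / t))) • (y' - y))
      (𝓝[>] 0)
      (𝓝 (y + ∑ y' ∈ N.filter (fun y' => ⟪θ, y⟫ + φ y < ⟪θ, y'⟫ + φ y'),
        q y y' • (y' - y))) := by

  apply Tendsto.const_add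
  rw [Finset.sum_filter]
  apply tendsto_finset_sum
  intro b hb
  set Δ : ℝ := ⟪θ, b - y⟫ + φ b - φ y with hΔ
  have hΔne : Δ ≠ 0 := by
    have := hne b hb
    simp only [hΔ, inner_sub_right]
    intro h
    apply this
    linarith
  set c : ℝ := q b y / q y b with hc
  have hcpos : 0 < c := div_pos (hq_pos b hb).2 (hq_pos b hb).1
  have hinv : Tendsto (fun t : ℝ => t⁻¹) (𝓝[>] (0:ℝ)) atTop :=
    tendsto_inv_nhdsGT_zero
  rcases lt_or_gt_of_ne hΔne with hneg | hpos
  · -- Δ < 0 : limit 0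
    have h1 : Tendsto (fun t : ℝ => Δ / t) (𝓝[>] (0:ℝ)) atBot := by
      simp only [div_eq_mul_inv]
      exact Tendsto.const_mul_atTop_of_neg hneg hinv
    have h2 : Tendsto (fun t : ℝ => min 1 (c * Real.exp (Δ / t))) (𝓝[>] (0:ℝ))
        (𝓝 0) := by
      have h3 : Tendsto (fun t : ℝ => c * Real.exp (Δ / t)) (𝓝[>] (0:ℝ))
          (𝓝 0) := by
        have := (Real.tendsto_exp_atBot.comp h1).const_mul c
        simpa using this
      have := (tendsto_const_nhds (x := (1:ℝ)) (f := 𝓝[>] (0:ℝ))).min h3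
      simpa using this
    have hif : (if ⟪θ, y⟫ + φ y < ⟪θ, b⟫ + φ b then q y b • (b - y)
        else 0) = (0:EuclideanSpace ℝ (Fin d)) := by
      rw [if_neg]
      intro h
      have : 0 < Δ := by simp only [hΔ, inner_sub_right]; linarith
      linarith
    rw [hif]
    have := (h2.const_mul (q y b)).smul_const (b - y)
    simpa using this
  · -- Δ > 0 : limit q y b • (b - y)
    have h1 : Tendsto (fun t : ℝ => Δ / t) (𝓝[>] (0:ℝ)) atTop := by
      simp only [div_eq_mul_inv]
      exact hinv.const_mul_atTop hpos
    have h3 : Tendsto (fun t : ℝ => c * Real.exp (Δ / t)) (𝓝[>] (0:ℝ))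
        atTop := (Real.tendsto_exp_atTop.comp h1).const_mul_atTop hcpos
    have hev : ∀ᶠ t in 𝓝[>] (0:ℝ),
        (q y b * min 1 (c * Real.exp (Δ / t))) • (b - y) = q y b • (b - y) := by
      filter_upwards [h3.eventually_ge_atTop 1] with t ht
      rw [min_eq_left ht, mul_one]
    have hif : (if ⟪θ, y⟫ + φ y < ⟪θ, b⟫ + φ b then q y b • (b - y)
        else 0) = q y b • (b - y) := by
      rw [if_pos]
      have : 0 < Δ := hpos
      simp only [hΔ, inner_sub_right] at this
      linarith
    rw [hif]
    exact tendsto_const_nhds.congr' (hev.mono fun t h => h.symm)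
end

section
/- In the same setting, as t → ∞ the expected first Metropolis–Hastings iterate converges: E_{p^{(1)}_{θ,y}}[Y] → y + Σ_{y'∈𝒩(y)} min(q(y,y'), q(y',y))·(y'−y). -/
open Finset Filter
open scoped RealInnerProductSpace Topology

/-! As `t → ∞` each exponent `c / t` tends to `0`, so each Metropolis–Hastings acceptance
weight `q(y,y') · min(1, q(y',y)/q(y,y') · exp(c/t))` tends to `min(q(y,y'), q(y',y))`;
the expected iterate is a finite sum of these weights times fixed vectors. -/

theorem Real.tendsto_exp_const_div_atTop_nhds_one (c : ℝ) :
    Tendsto (fun t : ℝ => Real.exp (c / t)) atTop (𝓝 1) := by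
  simpa [Function.comp_def] using
    (Real.continuous_exp.tendsto 0).comp (tendsto_const_nhds.div_atTop tendsto_id)

theorem mul_min_one_div_mul {K : Type*} [Field K] [LinearOrder K] [IsStrictOrderedRing K]
    {a : K} (ha : 0 < a) (b x : K) :
    a * min 1 (b / a * x) = min a (b * x) := by
  rw [mul_min_of_nonneg _ _ ha.le, mul_one, ← mul_assoc, mul_div_cancel₀ _ ha.ne']

theorem tendsto_mul_min_one_div_mul_exp_div_atTop {a : ℝ} (ha : 0 < a) (b c : ℝ) :
    Tendsto (fun t : ℝ => a * min 1 (b / a * Real.exp (c / t))) atTop (𝓝 (min a b)) := by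
  simp_rw [mul_min_one_div_mul ha]
  simpa using tendsto_const_nhds.min
    (tendsto_const_nhds.mul (Real.tendsto_exp_const_div_atTop_nhds_one c))

theorem expected_first_iterate_high_temperature_limit_general {d : ℕ}
    (y : EuclideanSpace ℝ (Fin d)) (N : Finset (EuclideanSpace ℝ (Fin d)))
    (φ : EuclideanSpace ℝ (Fin d) → ℝ) (θ : EuclideanSpace ℝ (Fin d))
    (q : EuclideanSpace ℝ (Fin d) → EuclideanSpace ℝ (Fin d) → ℝ)
    (hq_pos : ∀ y' ∈ N, 0 < q y y' ∧ 0 < q y' y) :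
    Tendsto
      (fun t : ℝ => y + ∑ y' ∈ N,
        (q y y' * min 1 ((q y' y / q y y') *
          Real.exp ((⟪θ, y' - y⟫ + φ y' - φ y) / t))) • (y' - y))
      atTop
      (𝓝 (y + ∑ y' ∈ N, min (q y y') (q y' y) • (y' - y))) :=
  tendsto_const_nhds.add <| tendsto_finsetSum N fun y' hy' =>
    (tendsto_mul_min_one_div_mul_exp_div_atTop (hq_pos y' hy').1 _ _).smul_const _

/-- High-temperature limit of the expected first Metropolis–Hastings iterate:
it converges to `y + Σ_{y'∈𝒩(y)} min(q(y,y'), q(y',y))·(y'−y)` as `t → ∞`. -/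
theorem expected_first_iterate_high_temperature_limit {d : ℕ}
    (y : EuclideanSpace ℝ (Fin d)) (N : Finset (EuclideanSpace ℝ (Fin d)))
    (hy : y ∉ N)
    (φ : EuclideanSpace ℝ (Fin d) → ℝ) (θ : EuclideanSpace ℝ (Fin d))
    (q : EuclideanSpace ℝ (Fin d) → EuclideanSpace ℝ (Fin d) → ℝ)
    (hq_pos : ∀ y' ∈ N, 0 < q y y' ∧ 0 < q y' y) :
    Tendsto
      (fun t : ℝ => y + ∑ y' ∈ N,
        (q y y' * min 1 ((q y' y / q y y') *
          Real.exp ((⟪θ, y' - y⟫ + φ y' - φ y) / t))) • (y' - y))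
      atTop
      (𝓝 (y + ∑ y' ∈ N, min (q y y') (q y' y) • (y' - y))) :=
  expected_first_iterate_high_temperature_limit_general y N φ θ q hq_pos
end
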